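/- arXiv:0809.3457 — 3 statements merged into one kernel-verified Lean document; each statement's English description precedes it below -/
import Mathlib

section
/- Let (X,d,μ) satisfy the n-dimensional growth condition with μ(X) < ∞, let K be a standard singular integral kernel with smoothness exponent γ, and let T_ε f(x) = ∫ η(d(x,y)/ε) K(x,y) f(y) dμ(y) be the smoothly truncated operators. Let 0 < β < min(n,γ). If sup_{ε>0} ‖T_ε 1‖_{Λ_β} ≤ C < ∞, then the kernel satisfies the uniform cancellation condition (S3): there is C₃ such that |∫_{r₁ < d(x,y) < r₂} K(x,y) dμ(y)| ≤ C₃ for all 0 < r₁ < r₂ < ∞ and all x ∈ X. -/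
/-!
Write the indicator of the annulus `r₁ < d(x,y) < r₂` as `1_{d > r₁} - 1_{d ≥ r₂}` and compare
each indicator with the smooth cutoff `η(d / 2r)` at the same scale `r`. Against the smooth
cutoffs, `K x` integrates to `T_{2r₁}1(x)` and `T_{2r₂}1(x)`, both bounded by `C`. Two functions
of `d(x,y)` with values in `[0,1]` that vanish for `d < r` and equal `1` for `d ≥ 2r` differ only
on `r ≤ d < 2r`, where `‖K x y‖ ≤ C₁ r⁻ⁿ` and `μ` has mass at most `A (2r)ⁿ`; so each comparison
costs at most `C₁ A 2ⁿ`.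
-/

open MeasureTheory Metric

structure IsRadialCutoff (r : ℝ) (φ : ℝ → ℝ) : Prop where
  measurable : Measurable φ
  nonneg : ∀ s, 0 ≤ φ s
  le_one : ∀ s, φ s ≤ 1
  eq_zero : ∀ s < r, φ s = 0
  eq_one : ∀ s, 2 * r ≤ s → φ s = 1

namespace IsRadialCutoff

lemma indicator_Ioi {r : ℝ} (hr : 0 < r) : IsRadialCutoff r ((Set.Ioi r).indicator 1) where
  measurable := measurable_one.indicator measurableSet_Ioi
  nonneg _ := Set.indicator_nonneg (fun _ _ => zero_le_one) _
  le_one _ := Set.indicator_le_self' (fun _ _ => zero_le_one) _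
  eq_zero s hs := Set.indicator_of_notMem (fun h : r < s => (h.trans hs).false) _
  eq_one s hs := Set.indicator_of_mem (show r < s by linarith) _

lemma indicator_Ici {r : ℝ} (hr : 0 ≤ r) : IsRadialCutoff r ((Set.Ici r).indicator 1) where
  measurable := measurable_one.indicator measurableSet_Ici
  nonneg _ := Set.indicator_nonneg (fun _ _ => zero_le_one) _
  le_one _ := Set.indicator_le_self' (fun _ _ => zero_le_one) _
  eq_zero s hs := Set.indicator_of_notMem (fun h : r ≤ s => (h.trans_lt hs).false) _
  eq_one s hs := Set.indicator_of_mem (show r ≤ s by linarith) _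

lemma comp_div {η : ℝ → ℝ} (hη : Measurable η) (hη0 : ∀ s, 0 ≤ η s) (hη1 : ∀ s, η s ≤ 1)
    (hηlo : ∀ s : ℝ, s ≤ 1 / 2 → η s = 0) (hηhi : ∀ s : ℝ, 1 ≤ s → η s = 1)
    {r : ℝ} (hr : 0 < r) : IsRadialCutoff r (fun s => η (s / (2 * r))) where
  measurable := hη.comp (measurable_id.div_const _)
  nonneg _ := hη0 _
  le_one _ := hη1 _
  eq_zero s hs := hηlo _ (by rw [div_le_iff₀ (by positivity)]; linarith)
  eq_one s hs := hηhi _ (by rwa [le_div_iff₀ (by positivity), one_mul])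

lemma abs_le_one {r : ℝ} {φ : ℝ → ℝ} (hφ : IsRadialCutoff r φ) (s : ℝ) : |φ s| ≤ 1 :=
  abs_le.2 ⟨by linarith [hφ.nonneg s], hφ.le_one s⟩

lemma abs_sub_le_one {r : ℝ} {φ ψ : ℝ → ℝ} (hφ : IsRadialCutoff r φ) (hψ : IsRadialCutoff r ψ)
    (s : ℝ) : |φ s - ψ s| ≤ 1 :=
  abs_sub_le_iff.2
    ⟨by linarith [hφ.le_one s, hψ.nonneg s], by linarith [hψ.le_one s, hφ.nonneg s]⟩

end IsRadialCutoff

section Kernel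

variable {X : Type*} [MetricSpace X] {K : X → X → ℂ} {n A C₁ r : ℝ} {x : X}

lemma norm_le_div_rpow_of_le_dist (hn : 0 ≤ n)
    (hK : ∀ y, x ≠ y → ‖K x y‖ ≤ C₁ / dist x y ^ n) (hr : 0 < r) {y : X} (hy : r ≤ dist x y) :
    ‖K x y‖ ≤ C₁ / r ^ n := by
  have hd : 0 < dist x y := hr.trans_le hy
  have hKy := hK y (dist_pos.1 hd)
  have hC₁ : 0 ≤ C₁ := by
    have := (norm_nonneg _).trans hKy
    rwa [le_div_iff₀ (Real.rpow_pos_of_pos hd n), zero_mul] at this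
  exact hKy.trans (div_le_div_of_nonneg_left hC₁ (Real.rpow_pos_of_pos hr n)
    (Real.rpow_le_rpow hr.le hy hn))

lemma norm_radial_mul_le {φ : ℝ → ℝ} (hn : 0 ≤ n) (hC₁ : 0 ≤ C₁)
    (hK : ∀ y, x ≠ y → ‖K x y‖ ≤ C₁ / dist x y ^ n) (hr : 0 < r)
    (hφ1 : ∀ s, |φ s| ≤ 1) (hφ0 : ∀ s < r, φ s = 0) (y : X) :
    ‖(φ (dist x y) : ℂ) * K x y‖ ≤ C₁ / r ^ n := by
  rcases lt_or_ge (dist x y) r with hy | hy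
  · rw [hφ0 _ hy, Complex.ofReal_zero, zero_mul, norm_zero]
    positivity
  · rw [norm_mul, Complex.norm_real, Real.norm_eq_abs]
    exact (mul_le_of_le_one_left (norm_nonneg _) (hφ1 _)).trans
      (norm_le_div_rpow_of_le_dist hn hK hr hy)

lemma integrable_radial_mul [MeasurableSpace X] [BorelSpace X] {μ : Measure X}
    [IsFiniteMeasure μ] {φ : ℝ → ℝ} (hKm : Measurable (Function.uncurry K)) (hn : 0 ≤ n)
    (hC₁ : 0 ≤ C₁) (hK : ∀ y, x ≠ y → ‖K x y‖ ≤ C₁ / dist x y ^ n) (hr : 0 < r)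
    (hφm : Measurable φ) (hφ1 : ∀ s, |φ s| ≤ 1) (hφ0 : ∀ s < r, φ s = 0) :
    Integrable (fun y => (φ (dist x y) : ℂ) * K x y) μ := by
  have hdist : Measurable (dist x) := (continuous_const.dist continuous_id).measurable
  refine (integrable_const (C₁ / r ^ n)).mono' ?_
    (.of_forall (norm_radial_mul_le hn hC₁ hK hr hφ1 hφ0))
  exact ((Complex.measurable_ofReal.comp (hφm.comp hdist)).mul
    hKm.of_uncurry_left).aestronglyMeasurable

lemma measureReal_ball_le [MeasurableSpace X] {μ : Measure X}
    (growth : ∀ (x : X) (r : ℝ), 0 < r → μ (ball x r) ≤ ENNReal.ofReal (A * r ^ n))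
    (hA : 0 ≤ A) (hr : 0 < r) : μ.real (ball x r) ≤ A * r ^ n :=
  ENNReal.toReal_le_of_le_ofReal (by positivity) (growth x r hr)

lemma norm_integral_radial_mul_le [MeasurableSpace X] {μ : Measure X}
    (growth : ∀ (x : X) (r : ℝ), 0 < r → μ (ball x r) ≤ ENNReal.ofReal (A * r ^ n))
    (hA : 0 ≤ A) (hn : 0 ≤ n) (hC₁ : 0 ≤ C₁)
    (hK : ∀ y, x ≠ y → ‖K x y‖ ≤ C₁ / dist x y ^ n) (hr : 0 < r) {φ : ℝ → ℝ}
    (hφ1 : ∀ s, |φ s| ≤ 1) (hφ0 : ∀ s < r, φ s = 0) (hφ2 : ∀ s, 2 * r ≤ s → φ s = 0) :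
    ‖∫ y, (φ (dist x y) : ℂ) * K x y ∂μ‖ ≤ C₁ * A * 2 ^ n := by
  have h2r : 0 < 2 * r := by positivity
  have hball : μ (ball x (2 * r)) < ⊤ :=
    (growth x _ h2r).trans_lt ENNReal.ofReal_lt_top
  rw [← setIntegral_eq_integral_of_forall_compl_eq_zero (s := ball x (2 * r)) fun y hy => by
    rw [hφ2 _ (by simpa [dist_comm] using hy), Complex.ofReal_zero, zero_mul]]
  calc ‖∫ y in ball x (2 * r), (φ (dist x y) : ℂ) * K x y ∂μ‖
      ≤ C₁ / r ^ n * μ.real (ball x (2 * r)) :=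
        norm_setIntegral_le_of_norm_le_const hball fun y _ =>
          norm_radial_mul_le hn hC₁ hK hr hφ1 hφ0 y
    _ ≤ C₁ / r ^ n * (A * (2 * r) ^ n) := by
        gcongr; exact measureReal_ball_le growth hA h2r
    _ = C₁ * A * 2 ^ n := by
        rw [Real.mul_rpow zero_le_two hr.le]
        field_simp

section Integral

variable [MeasurableSpace X] [BorelSpace X] {μ : Measure X} [IsFiniteMeasure μ]

lemma IsRadialCutoff.integrable_mul {φ : ℝ → ℝ} (hφ : IsRadialCutoff r φ)
    (hKm : Measurable (Function.uncurry K)) (hn : 0 ≤ n) (hC₁ : 0 ≤ C₁)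
    (hK : ∀ y, x ≠ y → ‖K x y‖ ≤ C₁ / dist x y ^ n) (hr : 0 < r) :
    Integrable (fun y => (φ (dist x y) : ℂ) * K x y) μ :=
  integrable_radial_mul hKm hn hC₁ hK hr hφ.measurable hφ.abs_le_one hφ.eq_zero

lemma norm_integral_sub_integral_le_of_isRadialCutoff
    (growth : ∀ (x : X) (r : ℝ), 0 < r → μ (ball x r) ≤ ENNReal.ofReal (A * r ^ n))
    (hA : 0 ≤ A) (hKm : Measurable (Function.uncurry K)) (hn : 0 ≤ n) (hC₁ : 0 ≤ C₁)
    (hK : ∀ y, x ≠ y → ‖K x y‖ ≤ C₁ / dist x y ^ n) (hr : 0 < r) {φ ψ : ℝ → ℝ}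
    (hφ : IsRadialCutoff r φ) (hψ : IsRadialCutoff r ψ) :
    ‖∫ y, (φ (dist x y) : ℂ) * K x y ∂μ - ∫ y, (ψ (dist x y) : ℂ) * K x y ∂μ‖ ≤
      C₁ * A * 2 ^ n := by
  rw [← integral_sub (hφ.integrable_mul hKm hn hC₁ hK hr) (hψ.integrable_mul hKm hn hC₁ hK hr)]
  simp_rw [← sub_mul, ← Complex.ofReal_sub]
  refine norm_integral_radial_mul_le growth hA hn hC₁ hK hr (hφ.abs_sub_le_one hψ)
    (fun s hs => ?_) (fun s hs => ?_)
  · rw [hφ.eq_zero s hs, hψ.eq_zero s hs, sub_zero]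
  · rw [hφ.eq_one s hs, hψ.eq_one s hs, sub_self]

lemma setIntegral_annulus_eq_sub (hKm : Measurable (Function.uncurry K)) (hn : 0 ≤ n)
    (hC₁ : 0 ≤ C₁) (hK : ∀ y, x ≠ y → ‖K x y‖ ≤ C₁ / dist x y ^ n) {r₁ r₂ : ℝ}
    (hr₁ : 0 < r₁) (hr₁₂ : r₁ < r₂) :
    ∫ y in {y : X | r₁ < dist x y ∧ dist x y < r₂}, K x y ∂μ =
      ∫ y, (((Set.Ioi r₁).indicator 1 (dist x y) : ℝ) : ℂ) * K x y ∂μ -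
        ∫ y, (((Set.Ici r₂).indicator 1 (dist x y) : ℝ) : ℂ) * K x y ∂μ := by
  have hS : MeasurableSet {y : X | r₁ < dist x y ∧ dist x y < r₂} :=
    measurableSet_Ioo.preimage (continuous_const.dist continuous_id).measurable
  rw [← integral_sub ((IsRadialCutoff.indicator_Ioi hr₁).integrable_mul hKm hn hC₁ hK hr₁)
    ((IsRadialCutoff.indicator_Ici (hr₁.trans hr₁₂).le).integrable_mul hKm hn hC₁ hK
      (hr₁.trans hr₁₂)), ← integral_indicator hS]
  congr 1
  ext y
  rcases lt_or_ge r₁ (dist x y) with h₁ | h₁ <;> rcases lt_or_ge (dist x y) r₂ with h₂ | h₂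
  · simp [h₁, h₂, h₂.not_ge]
  · simp [h₁, h₂, h₂.not_gt]
  · simp [h₁.not_gt, h₂.not_ge]
  · linarith

end Integral

end Kernel

theorem T1_implies_cancellation_general {X : Type*} [MetricSpace X] [MeasurableSpace X]
    [BorelSpace X] (μ : Measure X) (n A β : ℝ) (hn : 0 < n) (hA : 0 < A)
    (growth : ∀ (x : X) (r : ℝ), 0 < r → μ (ball x r) ≤ ENNReal.ofReal (A * r ^ n))
    (hfin : μ Set.univ < ⊤)
    (K : X → X → ℂ) (hKm : Measurable (Function.uncurry K)) (C₁ : ℝ)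
    (hS1 : ∀ x y : X, x ≠ y → ‖K x y‖ ≤ C₁ / dist x y ^ n)
    (η : ℝ → ℝ) (hη : ContDiff ℝ 1 η) (hη0 : ∀ s, 0 ≤ η s) (hη1 : ∀ s, η s ≤ 1)
    (hηlo : ∀ s : ℝ, s ≤ 1 / 2 → η s = 0) (hηhi : ∀ s : ℝ, 1 ≤ s → η s = 1)
    (C : ℝ)
    (hT1 : ∀ ε : ℝ, 0 < ε →
      (∀ x : X, ‖∫ y, (η (dist x y / ε) : ℂ) * K x y ∂μ‖ ≤ C) ∧
      (∀ x₁ x₂ : X,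
        ‖(∫ y, (η (dist x₁ y / ε) : ℂ) * K x₁ y ∂μ) -
            ∫ y, (η (dist x₂ y / ε) : ℂ) * K x₂ y ∂μ‖ ≤ C * dist x₁ x₂ ^ β)) :
    ∃ C₃ : ℝ, ∀ (x : X) (r₁ r₂ : ℝ), 0 < r₁ → r₁ < r₂ →
      ‖∫ y in {y : X | r₁ < dist x y ∧ dist x y < r₂}, K x y ∂μ‖ ≤ C₃ := by
  have : IsFiniteMeasure μ := ⟨hfin⟩
  obtain ⟨C₁', hC₁', hK⟩ :
      ∃ C₁' : ℝ, 0 ≤ C₁' ∧ ∀ x y : X, x ≠ y → ‖K x y‖ ≤ C₁' / dist x y ^ n :=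
    ⟨max C₁ 0, le_max_right _ _, fun x y hxy =>
      (hS1 x y hxy).trans (by gcongr; exact le_max_left _ _)⟩
  refine ⟨2 * C + 2 * (C₁' * A * 2 ^ n), fun x r₁ r₂ hr₁ hr₁₂ => ?_⟩
  have hr₂ : 0 < r₂ := hr₁.trans hr₁₂
  have hηcut : ∀ r, 0 < r → IsRadialCutoff r (fun s => η (s / (2 * r))) := fun r hr =>
    .comp_div hη.continuous.measurable hη0 hη1 hηlo hηhi hr
  have boundary₁ := norm_integral_sub_integral_le_of_isRadialCutoff (μ := μ) growth hA.le hKm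
    hn.le hC₁' (hK x) hr₁ (.indicator_Ioi hr₁) (hηcut r₁ hr₁)
  have boundary₂ := norm_integral_sub_integral_le_of_isRadialCutoff (μ := μ) growth hA.le hKm
    hn.le hC₁' (hK x) hr₂ (.indicator_Ici hr₂.le) (hηcut r₂ hr₂)
  have truncated₁ := (hT1 (2 * r₁) (by positivity)).1 x
  have truncated₂ := (hT1 (2 * r₂) (by positivity)).1 x
  rw [setIntegral_annulus_eq_sub hKm hn.le hC₁' (hK x) hr₁ hr₁₂]
  set J₁ := ∫ y, (η (dist x y / (2 * r₁)) : ℂ) * K x y ∂μ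
  set J₂ := ∫ y, (η (dist x y / (2 * r₂)) : ℂ) * K x y ∂μ
  rw [← dist_eq_norm] at boundary₁ boundary₂ ⊢
  calc _ ≤ _ := dist_triangle4 _ J₁ J₂ _
    _ ≤ _ := by
      rw [dist_comm J₂, dist_eq_norm J₁]
      linarith [norm_sub_le J₁ J₂]

/-- If the smooth truncations `T_ε` of a standard singular integral kernel satisfy
`‖T_ε 1‖_{Λ_β} ≤ C` uniformly in `ε > 0`, then the kernel satisfies the uniform
cancellation condition (S3): annulus integrals of `K(x,·)` are uniformly bounded,
for all `x`. -/
theorem T1_implies_cancellation {X : Type*} [MetricSpace X] [MeasurableSpace X]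
    [BorelSpace X] (μ : Measure X) (n A γ β : ℝ) (hn : 0 < n) (hA : 0 < A)
    (hγ : 0 < γ) (hγ1 : γ ≤ 1) (hβ : 0 < β) (hβn : β < n) (hβγ : β < γ)
    (growth : ∀ (x : X) (r : ℝ), 0 < r → μ (ball x r) ≤ ENNReal.ofReal (A * r ^ n))
    (hfin : μ Set.univ < ⊤)
    (K : X → X → ℂ) (hKm : Measurable (Function.uncurry K)) (C₁ C₂ : ℝ)
    (hS1 : ∀ x y : X, x ≠ y → ‖K x y‖ ≤ C₁ / dist x y ^ n)
    (hS2 : ∀ x₁ x₂ y : X, x₁ ≠ y → 2 * dist x₁ x₂ ≤ dist x₁ y →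
      ‖K x₁ y - K x₂ y‖ ≤ C₂ * dist x₁ x₂ ^ γ / dist x₁ y ^ (n + γ))
    (η : ℝ → ℝ) (hη : ContDiff ℝ 1 η) (hη0 : ∀ s, 0 ≤ η s) (hη1 : ∀ s, η s ≤ 1)
    (hηlo : ∀ s : ℝ, s ≤ 1 / 2 → η s = 0) (hηhi : ∀ s : ℝ, 1 ≤ s → η s = 1)
    (C : ℝ)
    (hT1 : ∀ ε : ℝ, 0 < ε →
      (∀ x : X, ‖∫ y, (η (dist x y / ε) : ℂ) * K x y ∂μ‖ ≤ C) ∧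
      (∀ x₁ x₂ : X,
        ‖(∫ y, (η (dist x₁ y / ε) : ℂ) * K x₁ y ∂μ) -
            ∫ y, (η (dist x₂ y / ε) : ℂ) * K x₂ y ∂μ‖ ≤ C * dist x₁ x₂ ^ β)) :
    ∃ C₃ : ℝ, ∀ (x : X) (r₁ r₂ : ℝ), 0 < r₁ → r₁ < r₂ →
      ‖∫ y in {y : X | r₁ < dist x y ∧ dist x y < r₂}, K x y ∂μ‖ ≤ C₃ :=
  T1_implies_cancellation_general μ n A β hn hA growth hfin K hKm C₁ hS1 η hη hη0 hη1 hηlo hηhi C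
    hT1
end

section
/- Let (X,d,μ) satisfy the n-dimensional growth condition with μ(X) < ∞. Let K be a standard singular integral kernel that additionally satisfies the cancellation condition (S3) (uniformly bounded integrals over annuli, μ-a.e. in x) and condition (S4) (the limit lim_{ε→0} ∫_{ε<d(x,y)<1} K(x,y) dμ(y) exists μ-a.e. in x). Then for every f in Lip_β with 0 < β < min(n,γ), the principal value Kf(x) = lim_{ε→0} ∫_{d(x,y)>ε} K(x,y) f(y) dμ(y) exists μ-a.e. in x, and ‖Kf‖_∞ ≤ c‖f‖_{Lip_β}. -/
/-!
For `0 < ε < 1` the truncated integral splits as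
`∫_{ε<d<1} K(x,y) (f y - f x) + f x ∫_{ε<d<1} K(x,y) + ∫_{d≥1} K(x,y) f y`.
By (S1) and Hölder continuity the first integrand is at most `C₁ L d(x,y)^(β-n)`, whose integral
over `0 < d(x,y) < 1` is bounded uniformly in `x` by summing the growth condition over dyadic
shells; so the first term converges by dominated convergence. The second converges by (S4), with
limit bounded by (S3), and the third is independent of `ε` and bounded by `C₁ M μ(X)`.
If `X` has at most one point, the growth condition forces `μ = 0`.
-/

open MeasureTheory Metric Filter Topology

section Growth

variable {X : Type*} [MetricSpace X] [MeasurableSpace X] {μ : Measure X} {n A : ℝ}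

theorem nullSingletonClass_of_growth (hn : 0 < n)
    (growth : ∀ (x : X) (r : ℝ), 0 < r → μ (ball x r) ≤ ENNReal.ofReal (A * r ^ n)) :
    NullSingletonClass μ := by
  refine ⟨fun x => le_antisymm ?_ bot_le⟩
  have hlim : Tendsto (fun r : ℝ => ENNReal.ofReal (A * r ^ n)) (𝓝[>] 0) (𝓝 0) := by
    have hcont : Continuous fun r : ℝ => ENNReal.ofReal (A * r ^ n) :=
      ENNReal.continuous_ofReal.comp (continuous_const.mul (Real.continuous_rpow_const hn.le))
    simpa [Real.zero_rpow hn.ne'] using (hcont.tendsto 0).mono_left nhdsWithin_le_nhds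
  refine ge_of_tendsto hlim ?_
  filter_upwards [self_mem_nhdsWithin] with r (hr : 0 < r)
  exact (measure_mono (Set.singleton_subset_iff.2 (mem_ball_self hr))).trans (growth x r hr)

theorem exists_lintegral_rpow_dist_le {β : ℝ} (hA : 0 < A)
    (hβ : 0 < β) (hβn : β < n)
    (growth : ∀ (x : X) (r : ℝ), 0 < r → μ (ball x r) ≤ ENNReal.ofReal (A * r ^ n)) :
    ∃ B : ℝ, 0 ≤ B ∧ ∀ x : X,
      ∫⁻ y in {y | 0 < dist x y ∧ dist x y < 1}, ENNReal.ofReal (dist x y ^ (β - n)) ∂μ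
        ≤ ENNReal.ofReal B := by
  set ρ : ℝ := 2⁻¹
  have hρ : 0 < ρ := by norm_num
  set q : ℝ := ρ ^ β
  have hq0 : 0 ≤ q := by positivity
  have hq1 : q < 1 := Real.rpow_lt_one hρ.le (by norm_num) hβ
  set a : ℝ := A * ρ ^ (β - n) * 2 ^ n
  refine ⟨a * (1 - q)⁻¹, by have := sub_pos.2 hq1; positivity, fun x => ?_⟩
  set shell : ℕ → Set X := fun k => {y | ρ ^ (k + 1) < dist x y ∧ dist x y ≤ ρ ^ k}
  have hcover : {y | 0 < dist x y ∧ dist x y < 1} ⊆ ⋃ k, shell k := fun y hy =>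
    Set.mem_iUnion.2 (exists_nat_pow_near_of_lt_one hy.1 hy.2.le hρ (by norm_num))
  have hshell : ∀ k, ∫⁻ y in shell k, ENNReal.ofReal (dist x y ^ (β - n)) ∂μ
      ≤ ENNReal.ofReal (a * q ^ k) := by
    intro k
    have hr : 0 < ρ ^ k := pow_pos hρ k
    have hmeas : μ (shell k) ≤ ENNReal.ofReal (A * (2 * ρ ^ k) ^ n) :=
      (measure_mono fun y hy => mem_ball'.2 (hy.2.trans_lt (by linarith))).trans
        (growth x _ (by positivity))
    have hval : (ρ ^ (k + 1)) ^ (β - n) * (A * (2 * ρ ^ k) ^ n) = a * q ^ k := by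
      rw [pow_succ, Real.mul_rpow hr.le hρ.le, Real.mul_rpow zero_le_two hr.le,
        Real.rpow_pow_comm hρ.le, Real.rpow_sub hr]
      field_simp
      ring
    calc ∫⁻ y in shell k, ENNReal.ofReal (dist x y ^ (β - n)) ∂μ
        ≤ ∫⁻ _ in shell k, ENNReal.ofReal ((ρ ^ (k + 1)) ^ (β - n)) ∂μ :=
          setLIntegral_mono measurable_const fun y hy => ENNReal.ofReal_le_ofReal
            (Real.rpow_le_rpow_of_nonpos (pow_pos hρ _) hy.1.le (by linarith))
      _ = ENNReal.ofReal ((ρ ^ (k + 1)) ^ (β - n)) * μ (shell k) := setLIntegral_const _ _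
      _ ≤ ENNReal.ofReal ((ρ ^ (k + 1)) ^ (β - n)) * ENNReal.ofReal (A * (2 * ρ ^ k) ^ n) := by
          gcongr
      _ = ENNReal.ofReal (a * q ^ k) := by
          rw [← ENNReal.ofReal_mul (by positivity), hval]
  calc ∫⁻ y in {y | 0 < dist x y ∧ dist x y < 1}, ENNReal.ofReal (dist x y ^ (β - n)) ∂μ
      ≤ ∫⁻ y in ⋃ k, shell k, ENNReal.ofReal (dist x y ^ (β - n)) ∂μ := lintegral_mono_set hcover
    _ ≤ ∑' k, ∫⁻ y in shell k, ENNReal.ofReal (dist x y ^ (β - n)) ∂μ := lintegral_iUnion_le _ _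
    _ ≤ ∑' k, ENNReal.ofReal (a * q ^ k) := ENNReal.tsum_le_tsum hshell
    _ = ENNReal.ofReal (a * (1 - q)⁻¹) := by
      rw [← ENNReal.ofReal_tsum_of_nonneg (fun k => by positivity)
        ((summable_geometric_of_lt_one hq0 hq1).mul_left a), tsum_mul_left,
        tsum_geometric_of_lt_one hq0 hq1]

end Growth

theorem measure_eq_zero_of_subsingleton {X : Type*} [MeasurableSpace X] [Subsingleton X]
    (μ : Measure X) [NullSingletonClass μ] : μ = 0 :=
  Measure.measure_univ_eq_zero.1 (Set.subsingleton_univ.measure_zero μ)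

theorem tendsto_setIntegral_lt_nhdsGT {X E : Type*} [MeasurableSpace X] [NormedAddCommGroup E]
    [NormedSpace ℝ E] {μ : Measure X} {φ : X → ℝ} {g : X → E} (hφ : Measurable φ)
    (hg : IntegrableOn g {y | 0 < φ y} μ) :
    Tendsto (fun ε => ∫ y in {y | ε < φ y}, g y ∂μ) (𝓝[>] 0)
      (𝓝 (∫ y in {y | 0 < φ y}, g y ∂μ)) := by
  have hmeas : ∀ ε, MeasurableSet {y | ε < φ y} := fun ε => measurableSet_lt measurable_const hφ
  have hsub : ∀ ε : ℝ, 0 < ε → {y | ε < φ y} ⊆ {y | 0 < φ y} := fun ε hε y hy => hε.trans hy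
  simp_rw [← integral_indicator (hmeas _)]
  refine tendsto_integral_filter_of_dominated_convergence ({y | 0 < φ y}.indicator (‖g ·‖)) ?_ ?_
    ((integrable_indicator_iff (hmeas 0)).2 hg.norm) (.of_forall fun y => ?_)
  · filter_upwards [self_mem_nhdsWithin] with ε hε
    exact (aestronglyMeasurable_indicator_iff (hmeas ε)).2
      (hg.aestronglyMeasurable.mono_set (hsub ε hε))
  · filter_upwards [self_mem_nhdsWithin] with ε hε
    refine .of_forall fun y => ?_
    rw [← norm_indicator_eq_indicator_norm]
    exact norm_indicator_le_of_subset (hsub ε hε) g y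
  · refine tendsto_const_nhds.congr' ?_
    by_cases hy : 0 < φ y
    · filter_upwards [Ioo_mem_nhdsGT hy] with ε hε
      rw [Set.indicator_of_mem (show y ∈ {y | 0 < φ y} from hy),
        Set.indicator_of_mem (show y ∈ {y | ε < φ y} from hε.2)]
    · filter_upwards [self_mem_nhdsWithin] with ε hε
      rw [Set.indicator_of_notMem (show y ∉ {y | 0 < φ y} from hy),
        Set.indicator_of_notMem fun h => hy (hsub ε hε h)]

theorem norm_le_div_rpow_of_le_dist_s12 {X : Type*} [MetricSpace X] {k : X → ℂ} {x y : X}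
    {n C ε : ℝ} (hk : ∀ y, x ≠ y → ‖k y‖ ≤ C / dist x y ^ n) (hC : 0 ≤ C) (hn : 0 ≤ n)
    (hε : 0 < ε) (hy : ε ≤ dist x y) :
    ‖k y‖ ≤ C / ε ^ n := by
  have hxy : 0 < dist x y := hε.trans_le hy
  exact (hk y (dist_pos.1 hxy)).trans (by gcongr)

section Kernel

variable {X : Type*} [MetricSpace X] [MeasurableSpace X] [OpensMeasurableSpace X]
  {μ : Measure X} {k f : X → ℂ} {x : X} {n β C L B ε : ℝ}

theorem integrableOn_le_dist [IsFiniteMeasure μ] (hkm : AEStronglyMeasurable k μ)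
    (hk : ∀ y, x ≠ y → ‖k y‖ ≤ C / dist x y ^ n) (hC : 0 ≤ C) (hn : 0 ≤ n) (hε : 0 < ε) :
    IntegrableOn k {y | ε ≤ dist x y} μ :=
  Integrable.of_bound hkm.restrict (C / ε ^ n) <|
    ae_restrict_of_forall_mem (measurableSet_le measurable_const (by fun_prop))
      fun _ hy => norm_le_div_rpow_of_le_dist_s12 hk hC hn hε hy

theorem setLIntegral_enorm_mul_sub_le (hk : ∀ y, x ≠ y → ‖k y‖ ≤ C / dist x y ^ n)
    (hf : ∀ y, ‖f y - f x‖ ≤ L * dist y x ^ β) (hC : 0 ≤ C) (hL : 0 ≤ L)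
    (hB : ∫⁻ y in {y | 0 < dist x y ∧ dist x y < 1}, ENNReal.ofReal (dist x y ^ (β - n)) ∂μ
      ≤ ENNReal.ofReal B) :
    ∫⁻ y in {y | 0 < dist x y ∧ dist x y < 1}, ‖k y * (f y - f x)‖ₑ ∂μ
      ≤ ENNReal.ofReal (C * L * B) := by
  have hpt : ∀ y ∈ {y | 0 < dist x y ∧ dist x y < 1},
      ‖k y * (f y - f x)‖ₑ ≤ ENNReal.ofReal (C * L) * ENNReal.ofReal (dist x y ^ (β - n)) := by
    rintro y ⟨hxy, -⟩
    rw [← ENNReal.ofReal_mul (by positivity), ← ofReal_norm, norm_mul]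
    refine ENNReal.ofReal_le_ofReal ?_
    calc ‖k y‖ * ‖f y - f x‖ ≤ C / dist x y ^ n * (L * dist x y ^ β) := by
          gcongr
          exacts [hk y (dist_pos.1 hxy), dist_comm x y ▸ hf y]
      _ = C * L * dist x y ^ (β - n) := by rw [Real.rpow_sub hxy]; ring
  calc ∫⁻ y in {y | 0 < dist x y ∧ dist x y < 1}, ‖k y * (f y - f x)‖ₑ ∂μ
      ≤ ∫⁻ y in {y | 0 < dist x y ∧ dist x y < 1},
          ENNReal.ofReal (C * L) * ENNReal.ofReal (dist x y ^ (β - n)) ∂μ :=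
        setLIntegral_mono (by fun_prop) hpt
    _ = ENNReal.ofReal (C * L) * ∫⁻ y in {y | 0 < dist x y ∧ dist x y < 1},
          ENNReal.ofReal (dist x y ^ (β - n)) ∂μ := lintegral_const_mul _ (by fun_prop)
    _ ≤ ENNReal.ofReal (C * L) * ENNReal.ofReal B := mul_le_mul_right hB _
    _ = ENNReal.ofReal (C * L * B) := (ENNReal.ofReal_mul (by positivity)).symm


theorem setIntegral_dist_gt_mul_eq (hε : 0 < ε) (hε1 : ε < 1)
    (hg : IntegrableOn (fun y => k y * (f y - f x)) {y | 0 < dist x y ∧ dist x y < 1} μ)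
    (hkε : IntegrableOn k {y | ε < dist x y ∧ dist x y < 1} μ)
    (htail : IntegrableOn (fun y => k y * f y) {y | 1 ≤ dist x y} μ) :
    ∫ y in {y | ε < dist x y}, k y * f y ∂μ
      = (∫ y in {y | ε < dist x y ∧ dist x y < 1}, k y * (f y - f x) ∂μ)
        + f x * (∫ y in {y | ε < dist x y ∧ dist x y < 1}, k y ∂μ)
        + ∫ y in {y | 1 ≤ dist x y}, k y * f y ∂μ := by
  have hd : Measurable (dist x) := by fun_prop
  have hgε : IntegrableOn (fun y => k y * (f y - f x)) {y | ε < dist x y ∧ dist x y < 1} μ :=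
    hg.mono_set fun y hy => ⟨hε.trans hy.1, hy.2⟩
  have hsplit : {y | ε < dist x y} = {y | ε < dist x y ∧ dist x y < 1} ∪ {y | 1 ≤ dist x y} :=
    Set.ext fun y => ⟨fun h => (lt_or_ge (dist x y) 1).imp (⟨h, ·⟩) id,
      fun h => h.elim (·.1) hε1.trans_le⟩
  have hdisj : Disjoint {y | ε < dist x y ∧ dist x y < 1} {y | 1 ≤ dist x y} :=
    Set.disjoint_left.2 fun y hy hy' => (not_le.2 hy.2) hy'
  have hann : ∫ y in {y | ε < dist x y ∧ dist x y < 1}, k y * f y ∂μ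
      = (∫ y in {y | ε < dist x y ∧ dist x y < 1}, k y * (f y - f x) ∂μ)
        + f x * (∫ y in {y | ε < dist x y ∧ dist x y < 1}, k y ∂μ) := by
    rw [← integral_const_mul, ← integral_add hgε (hkε.const_mul _)]
    congr 1 with y
    ring
  have hkf : IntegrableOn (fun y => k y * f y) {y | ε < dist x y ∧ dist x y < 1} μ :=
    (hgε.add (hkε.const_mul (f x))).congr_fun (fun y _ => by simp only [Pi.add_apply]; ring)
      ((measurableSet_lt measurable_const hd).inter (measurableSet_lt hd measurable_const))
  rw [hsplit, setIntegral_union hdisj (measurableSet_le measurable_const hd) hkf htail,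
    hann]

theorem tendsto_setIntegral_dist_gt_mul [IsFiniteMeasure μ] (hkm : AEStronglyMeasurable k μ)
    (hfm : AEStronglyMeasurable f μ) (hk : ∀ y, x ≠ y → ‖k y‖ ≤ C / dist x y ^ n) (hC : 0 ≤ C)
    (hn : 0 ≤ n) (hfM : ∀ y, ‖f y‖ ≤ M)
    (hg : IntegrableOn (fun y => k y * (f y - f x)) {y | 0 < dist x y ∧ dist x y < 1} μ) {l : ℂ}
    (hl : Tendsto (fun ε => ∫ y in {y | ε < dist x y ∧ dist x y < 1}, k y ∂μ) (𝓝[>] 0) (𝓝 l)) :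
    Tendsto (fun ε => ∫ y in {y | ε < dist x y}, k y * f y ∂μ) (𝓝[>] 0)
      (𝓝 ((∫ y in {y | 0 < dist x y ∧ dist x y < 1}, k y * (f y - f x) ∂μ) + f x * l
        + ∫ y in {y | 1 ≤ dist x y}, k y * f y ∂μ)) := by
  have hd : Measurable (dist x) := by fun_prop
  have htail : IntegrableOn (fun y => k y * f y) {y | 1 ≤ dist x y} μ :=
    (integrableOn_le_dist hkm hk hC hn one_pos).mul_bdd hfm.restrict (.of_forall hfM)
  have hnear : ∀ ε, ∫ y in {y | ε < dist x y}, k y * (f y - f x) ∂μ.restrict {y | dist x y < 1}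
      = ∫ y in {y | ε < dist x y ∧ dist x y < 1}, k y * (f y - f x) ∂μ := fun ε => by
    rw [Measure.restrict_restrict (measurableSet_lt measurable_const hd)]
    rfl
  have hg' : IntegrableOn (fun y => k y * (f y - f x)) {y | 0 < dist x y}
      (μ.restrict {y | dist x y < 1}) := by
    rwa [IntegrableOn, Measure.restrict_restrict (measurableSet_lt measurable_const hd)]
  have hnear_lim := tendsto_setIntegral_lt_nhdsGT hd hg'
  simp only [hnear] at hnear_lim
  refine ((hnear_lim.add (hl.const_mul (f x))).add tendsto_const_nhds).congr' ?_
  filter_upwards [Ioo_mem_nhdsGT one_pos] with ε hε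
  exact (setIntegral_dist_gt_mul_eq hε.1 hε.2 hg
    ((integrableOn_le_dist hkm hk hC hn hε.1).mono_set fun y hy => hy.1.le) htail).symm

theorem exists_tendsto_setIntegral_dist_gt_mul_of_holder [IsFiniteMeasure μ]
    (hkm : AEStronglyMeasurable k μ) (hfm : AEStronglyMeasurable f μ)
    (hk : ∀ y, x ≠ y → ‖k y‖ ≤ C / dist x y ^ n) (hC : 0 ≤ C) (hn : 0 ≤ n)
    (hf : ∀ y, ‖f y - f x‖ ≤ L * dist y x ^ β) (hL : 0 ≤ L) (hfM : ∀ y, ‖f y‖ ≤ M)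
    (hB0 : 0 ≤ B)
    (hB : ∫⁻ y in {y | 0 < dist x y ∧ dist x y < 1}, ENNReal.ofReal (dist x y ^ (β - n)) ∂μ
      ≤ ENNReal.ofReal B) {C₃ : ℝ}
    (hC₃ : ∀ ε, 0 < ε → ε < 1 → ‖∫ y in {y | ε < dist x y ∧ dist x y < 1}, k y ∂μ‖ ≤ C₃)
    {l : ℂ}
    (hl : Tendsto (fun ε => ∫ y in {y | ε < dist x y ∧ dist x y < 1}, k y ∂μ) (𝓝[>] 0) (𝓝 l)) :
    ∃ l' : ℂ, Tendsto (fun ε => ∫ y in {y | ε < dist x y}, k y * f y ∂μ) (𝓝[>] 0) (𝓝 l') ∧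
      ‖l'‖ ≤ C * L * B + M * C₃ + C * M * μ.real Set.univ := by
  have hM : 0 ≤ M := (norm_nonneg _).trans (hfM x)
  have hlint := setLIntegral_enorm_mul_sub_le (μ := μ) hk hf hC hL hB
  have hg : IntegrableOn (fun y => k y * (f y - f x)) {y | 0 < dist x y ∧ dist x y < 1} μ :=
    ⟨(hkm.mul (hfm.sub aestronglyMeasurable_const)).restrict,
      hasFiniteIntegral_iff_enorm.2 (hlint.trans_lt ENNReal.ofReal_lt_top)⟩
  refine ⟨_, tendsto_setIntegral_dist_gt_mul hkm hfm hk hC hn hfM hg hl, ?_⟩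
  have hnear : ‖∫ y in {y | 0 < dist x y ∧ dist x y < 1}, k y * (f y - f x) ∂μ‖ ≤ C * L * B := by
    rw [← ENNReal.ofReal_le_ofReal_iff (by positivity), ofReal_norm]
    exact (enorm_integral_le_lintegral_enorm _).trans hlint
  have hlim : ‖l‖ ≤ C₃ := le_of_tendsto hl.norm <| by
    filter_upwards [Ioo_mem_nhdsGT one_pos] with ε hε using hC₃ ε hε.1 hε.2
  have htail : ‖∫ y in {y | 1 ≤ dist x y}, k y * f y ∂μ‖ ≤ C * M * μ.real Set.univ := by
    refine (norm_setIntegral_le_of_norm_le_const (measure_lt_top _ _) fun y hy => ?_).trans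
      (mul_le_mul_of_nonneg_left (measureReal_mono (Set.subset_univ _)) (mul_nonneg hC hM))
    rw [norm_mul]
    have := norm_le_div_rpow_of_le_dist_s12 hk hC hn one_pos hy
    rw [Real.one_rpow, div_one] at this
    exact mul_le_mul this (hfM y) (norm_nonneg _) hC
  calc _ ≤ ‖∫ y in {y | 0 < dist x y ∧ dist x y < 1}, k y * (f y - f x) ∂μ‖ + ‖f x‖ * ‖l‖
        + ‖∫ y in {y | 1 ≤ dist x y}, k y * f y ∂μ‖ := by
        rw [← norm_mul]
        exact norm_add₃_le
    _ ≤ C * L * B + M * C₃ + C * M * μ.real Set.univ := by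
        gcongr
        exact hfM x

end Kernel

theorem pv_exists_ae_general {X : Type*} [MetricSpace X] [MeasurableSpace X]
    [BorelSpace X] (μ : Measure X) (n A β : ℝ) (hn : 0 < n) (hA : 0 < A)
    (hβ : 0 < β) (hβn : β < n)
    (growth : ∀ (x : X) (r : ℝ), 0 < r → μ (ball x r) ≤ ENNReal.ofReal (A * r ^ n))
    (hfin : μ Set.univ < ⊤)
    (K : X → X → ℂ) (hKm : Measurable (Function.uncurry K)) (C₁ C₃ : ℝ)
    (hS1 : ∀ x y : X, x ≠ y → ‖K x y‖ ≤ C₁ / dist x y ^ n)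
    (hS3 : ∀ᵐ x ∂μ, ∀ r₁ r₂ : ℝ, 0 < r₁ → r₁ < r₂ →
      ‖∫ y in {y : X | r₁ < dist x y ∧ dist x y < r₂}, K x y ∂μ‖ ≤ C₃)
    (hS4 : ∀ᵐ x ∂μ, ∃ l : ℂ, Tendsto
      (fun ε : ℝ => ∫ y in {y : X | ε < dist x y ∧ dist x y < 1}, K x y ∂μ)
      (nhdsWithin 0 (Set.Ioi 0)) (nhds l)) :
    ∃ c > 0, ∀ (f : X → ℂ) (M L : ℝ), Measurable f →
      (∀ x, ‖f x‖ ≤ M) → (∀ x y : X, ‖f x - f y‖ ≤ L * dist x y ^ β) →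
      ∀ᵐ x ∂μ, ∃ l : ℂ,
        Tendsto (fun ε : ℝ => ∫ y in {y : X | ε < dist x y}, K x y * f y ∂μ)
          (nhdsWithin 0 (Set.Ioi 0)) (nhds l) ∧
        ‖l‖ ≤ c * (M + L) := by
  rcases subsingleton_or_nontrivial X with hX | hX
  · have := nullSingletonClass_of_growth hn growth
    exact ⟨1, one_pos, fun _ _ _ _ _ _ => by simp [measure_eq_zero_of_subsingleton μ]⟩
  obtain ⟨a, b, hab⟩ := exists_pair_ne X
  have hdab : 0 < dist a b := dist_pos.2 hab
  have hC₁ : 0 ≤ C₁ := by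
    have := (norm_nonneg _).trans (hS1 a b hab)
    rwa [le_div_iff₀ (by positivity), zero_mul] at this
  have : IsFiniteMeasure μ := ⟨hfin⟩
  obtain ⟨B, hB0, hB⟩ := exists_lintegral_rpow_dist_le hA hβ hβn growth
  refine ⟨C₁ * B + max C₃ 0 + C₁ * μ.real Set.univ + 1, by positivity,
    fun f M L hfm hfM hfL => ?_⟩
  have hL : 0 ≤ L := (mul_nonneg_iff_of_pos_right (by positivity)).1
    ((norm_nonneg _).trans (hfL a b))
  have hM : 0 ≤ M := (norm_nonneg _).trans (hfM a)
  filter_upwards [hS3, hS4] with x hx3 ⟨l, hl⟩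
  obtain ⟨l', hl', hbound⟩ := exists_tendsto_setIntegral_dist_gt_mul_of_holder
    hKm.of_uncurry_left.aestronglyMeasurable hfm.aestronglyMeasurable (hS1 x) hC₁ hn.le
    (fun y => hfL y x) hL hfM hB0 (hB x) (fun ε h0 h1 => hx3 ε 1 h0 h1) hl
  refine ⟨l', hl', hbound.trans ?_⟩
  have hU : 0 ≤ μ.real Set.univ := measureReal_nonneg
  nlinarith [mul_nonneg (mul_nonneg hC₁ hB0) hM, mul_nonneg hM (sub_nonneg.2 (le_max_left C₃ 0)),
    mul_nonneg (le_max_right C₃ 0) hL, mul_nonneg (mul_nonneg hC₁ hU) hL]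

/-- For a standard singular integral kernel satisfying the cancellation conditions
(S3) and (S4), the principal value `Kf(x) = lim_{ε→0} ∫_{d(x,y)>ε} K(x,y) f(y) dμ(y)`
exists μ-a.e. for every `f ∈ Lip_β`, `0 < β < min(n,γ)`, with `‖Kf‖_∞ ≤ c‖f‖_{Lip_β}`. -/
theorem pv_exists_ae {X : Type*} [MetricSpace X] [MeasurableSpace X]
    [BorelSpace X] (μ : Measure X) (n A γ β : ℝ) (hn : 0 < n) (hA : 0 < A)
    (hγ : 0 < γ) (hγ1 : γ ≤ 1) (hβ : 0 < β) (hβn : β < n) (hβγ : β < γ)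
    (growth : ∀ (x : X) (r : ℝ), 0 < r → μ (ball x r) ≤ ENNReal.ofReal (A * r ^ n))
    (hfin : μ Set.univ < ⊤)
    (K : X → X → ℂ) (hKm : Measurable (Function.uncurry K)) (C₁ C₂ C₃ : ℝ)
    (hS1 : ∀ x y : X, x ≠ y → ‖K x y‖ ≤ C₁ / dist x y ^ n)
    (hS2 : ∀ x₁ x₂ y : X, x₁ ≠ y → 2 * dist x₁ x₂ ≤ dist x₁ y →
      ‖K x₁ y - K x₂ y‖ ≤ C₂ * dist x₁ x₂ ^ γ / dist x₁ y ^ (n + γ))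
    (hS3 : ∀ᵐ x ∂μ, ∀ r₁ r₂ : ℝ, 0 < r₁ → r₁ < r₂ →
      ‖∫ y in {y : X | r₁ < dist x y ∧ dist x y < r₂}, K x y ∂μ‖ ≤ C₃)
    (hS4 : ∀ᵐ x ∂μ, ∃ l : ℂ, Tendsto
      (fun ε : ℝ => ∫ y in {y : X | ε < dist x y ∧ dist x y < 1}, K x y ∂μ)
      (nhdsWithin 0 (Set.Ioi 0)) (nhds l)) :
    ∃ c > 0, ∀ (f : X → ℂ) (M L : ℝ), Measurable f →
      (∀ x, ‖f x‖ ≤ M) → (∀ x y : X, ‖f x - f y‖ ≤ L * dist x y ^ β) →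
      ∀ᵐ x ∂μ, ∃ l : ℂ,
        Tendsto (fun ε : ℝ => ∫ y in {y : X | ε < dist x y}, K x y * f y ∂μ)
          (nhdsWithin 0 (Set.Ioi 0)) (nhds l) ∧
        ‖l‖ ≤ c * (M + L) :=
  pv_exists_ae_general μ n A β hn hA hβ hβn growth hfin K hKm C₁ C₃ hS1 hS3 hS4
end

section
/- (M. Krein's theorem) Let H be a real or complex Hilbert space with inner product (·,·), and let D ⊆ H be a Banach space, dense in H, with ‖x‖_H ≤ C‖x‖_D for x ∈ D. Let A, B : D → D be linear operators with ‖Ax‖_D ≤ C_A‖x‖_D and ‖Bx‖_D ≤ C_B‖x‖_D for x ∈ D, such that (Ax, y) = (x, By) for all x, y ∈ D. Then ‖Ax‖_H ≤ (C_A C_B)^{1/2}‖x‖_H and ‖Bx‖_H ≤ (C_A C_B)^{1/2}‖x‖_H for all x ∈ D, and hence A and B extend to bounded operators on H with norm at most (C_A C_B)^{1/2}. -/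
/-!
For `x ∈ D` put `T = BA` and `a k = ‖T^k x‖_H`. The operator `T` is symmetric for the inner
product of `H`, so Cauchy–Schwarz gives `a (k+1)^2 = (T^k x, T^(k+2) x) ≤ a k · a (k+2)`: the
sequence `a` is log-convex, hence `a n ≥ a 0 · (a 1 / a 0)^n`. On the other hand
`a n ≤ C ‖T^n x‖_D ≤ C (C_A C_B)^n ‖x‖_D` grows at most geometrically with ratio `C_A C_B`,
which forces `a 1 ≤ C_A C_B · a 0`. Finally `‖Ax‖_H^2 = (x, BAx) ≤ ‖x‖_H ‖Tx‖_H`, and the same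
argument applies to `B`, whose formal adjoint is `A`. Being bounded for the norm of `H` on the
dense subspace `D`, both operators extend to `H`.
-/

theorem le_of_forall_pow_le_mul_pow {r c M : ℝ} (hc : 0 ≤ c) (h : ∀ n : ℕ, r ^ n ≤ M * c ^ n) :
    r ≤ c := by
  by_contra! hcr
  rcases hc.eq_or_lt with rfl | hc
  · have h1 := h 1
    rw [pow_one, pow_one, mul_zero] at h1
    linarith
  · obtain ⟨n, hn⟩ := pow_unbounded_of_one_lt M ((one_lt_div hc).2 hcr)
    rw [div_pow, lt_div_iff₀ (pow_pos hc n)] at hn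
    linarith [h n]

section LogConvex

variable {a : ℕ → ℝ}

theorem mul_le_mul_succ_of_sq_le (ha : ∀ k, 0 ≤ a k)
    (hconv : ∀ k, a (k + 1) ^ 2 ≤ a k * a (k + 2)) (k : ℕ) :
    a 1 * a k ≤ a 0 * a (k + 1) := by
  induction k with
  | zero => rw [mul_comm]
  | succ k ih =>
    rcases (ha (k + 1)).eq_or_lt with hzero | hpos
    · rw [← hzero, mul_zero]
      exact mul_nonneg (ha 0) (ha _)
    · refine le_of_mul_le_mul_right ?_ hpos
      calc a 1 * a (k + 1) * a (k + 1) = a 1 * a (k + 1) ^ 2 := by ring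
        _ ≤ a 1 * (a k * a (k + 2)) := mul_le_mul_of_nonneg_left (hconv k) (ha 1)
        _ = a 1 * a k * a (k + 2) := by ring
        _ ≤ a 0 * a (k + 1) * a (k + 2) := mul_le_mul_of_nonneg_right ih (ha _)
        _ = a 0 * a (k + 1 + 1) * a (k + 1) := by ring

theorem pow_mul_le_pow_mul_of_sq_le (ha : ∀ k, 0 ≤ a k)
    (hconv : ∀ k, a (k + 1) ^ 2 ≤ a k * a (k + 2)) (n : ℕ) :
    a 1 ^ n * a 0 ≤ a 0 ^ n * a n := by
  induction n with
  | zero => simp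
  | succ n ih =>
    calc a 1 ^ (n + 1) * a 0 = a 1 * (a 1 ^ n * a 0) := by ring
      _ ≤ a 1 * (a 0 ^ n * a n) := mul_le_mul_of_nonneg_left ih (ha 1)
      _ = a 0 ^ n * (a 1 * a n) := by ring
      _ ≤ a 0 ^ n * (a 0 * a (n + 1)) :=
        mul_le_mul_of_nonneg_left (mul_le_mul_succ_of_sq_le ha hconv n) (pow_nonneg (ha 0) n)
      _ = a 0 ^ (n + 1) * a (n + 1) := by ring

theorem le_mul_of_sq_le_of_le_mul_pow (ha : ∀ k, 0 ≤ a k)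
    (hconv : ∀ k, a (k + 1) ^ 2 ≤ a k * a (k + 2)) {c K : ℝ} (hc : 0 ≤ c)
    (hK : ∀ n, a n ≤ K * c ^ n) : a 1 ≤ c * a 0 := by
  rcases (ha 0).eq_or_lt with hzero | hpos
  · have h := mul_le_mul_succ_of_sq_le ha hconv 1
    rw [← hzero, zero_mul] at h
    rw [← hzero, mul_zero]
    nlinarith
  · suffices h : a 1 / a 0 ≤ c by rwa [div_le_iff₀ hpos] at h
    refine le_of_forall_pow_le_mul_pow (M := K / a 0) hc fun n => ?_
    rw [div_pow, div_mul_eq_mul_div, div_le_div_iff₀ (pow_pos hpos n) hpos]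
    calc a 1 ^ n * a 0 ≤ a 0 ^ n * a n := pow_mul_le_pow_mul_of_sq_le ha hconv n
      _ ≤ a 0 ^ n * (K * c ^ n) := mul_le_mul_of_nonneg_left (hK n) (pow_nonneg hpos.le n)
      _ = K * c ^ n * a 0 ^ n := by ring

end LogConvex

theorem Module.End.norm_pow_apply_le {R E : Type*} [Semiring R] [SeminormedAddCommGroup E]
    [Module R E] (T : Module.End R E) {c : ℝ} (hc : 0 ≤ c) (hT : ∀ x, ‖T x‖ ≤ c * ‖x‖)
    (n : ℕ) (x : E) : ‖(T ^ n) x‖ ≤ c ^ n * ‖x‖ := by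
  induction n with
  | zero => simp
  | succ n ih =>
    calc ‖(T ^ (n + 1)) x‖ = ‖T ((T ^ n) x)‖ := by rw [pow_succ', Module.End.mul_apply]
      _ ≤ c * (c ^ n * ‖x‖) := (hT _).trans (mul_le_mul_of_nonneg_left ih hc)
      _ = c ^ (n + 1) * ‖x‖ := by ring

theorem LinearMap.exists_extend_of_norm_le {𝕜 E Eₗ F : Type*} [NontriviallyNormedField 𝕜]
    [AddCommGroup E] [Module 𝕜 E] [SeminormedAddCommGroup Eₗ] [NormedSpace 𝕜 Eₗ]
    [NormedAddCommGroup F] [NormedSpace 𝕜 F] [CompleteSpace F]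
    (f : E →ₗ[𝕜] F) {e : E →ₗ[𝕜] Eₗ} (h_dense : DenseRange e) {M : ℝ} (hM : 0 ≤ M)
    (h_norm : ∀ x, ‖f x‖ ≤ M * ‖e x‖) :
    ∃ g : Eₗ →L[𝕜] F, ‖g‖ ≤ M ∧ ∀ x, g (e x) = f x :=
  ⟨f.extendOfNorm e, LinearMap.opNorm_extendOfNorm_le h_dense hM h_norm,
    LinearMap.extendOfNorm_eq h_dense ⟨M, h_norm⟩⟩

section FormalAdjoint

variable {𝕜 H V : Type*} [RCLike 𝕜] [NormedAddCommGroup H] [InnerProductSpace 𝕜 H]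

def IsFormallyAdjoint [AddCommGroup V] [Module 𝕜 V] (j : V →ₗ[𝕜] H) (A B : V →ₗ[𝕜] V) :
    Prop :=
  ∀ x y, inner 𝕜 (j (A x)) (j y) = inner 𝕜 (j x) (j (B y))

namespace IsFormallyAdjoint

section Module

variable [AddCommGroup V] [Module 𝕜 V] {j : V →ₗ[𝕜] H} {A B T : V →ₗ[𝕜] V}

theorem symm (h : IsFormallyAdjoint j A B) : IsFormallyAdjoint j B A := fun x y => by
  rw [← inner_conj_symm, ← h y x, inner_conj_symm]

theorem comp_self (h : IsFormallyAdjoint j A B) : IsFormallyAdjoint j (B ∘ₗ A) (B ∘ₗ A) :=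
  fun x y => by simp only [LinearMap.comp_apply]; rw [h.symm, h]

theorem norm_sq_le (h : IsFormallyAdjoint j A B) (x : V) :
    ‖j (A x)‖ ^ 2 ≤ ‖j x‖ * ‖j (B (A x))‖ := by
  rw [← inner_self_eq_norm_sq (𝕜 := 𝕜), h]
  exact re_inner_le_norm _ _

theorem norm_apply_le_of_norm_pow_apply_le (h : IsFormallyAdjoint j T T) {c K : ℝ} (hc : 0 ≤ c)
    (x : V) (hK : ∀ n, ‖j ((T ^ n) x)‖ ≤ K * c ^ n) : ‖j (T x)‖ ≤ c * ‖j x‖ := by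
  have hconv (k : ℕ) : ‖j ((T ^ (k + 1)) x)‖ ^ 2 ≤ ‖j ((T ^ k) x)‖ * ‖j ((T ^ (k + 2)) x)‖ := by
    simpa only [pow_succ', Module.End.mul_apply] using h.norm_sq_le ((T ^ k) x)
  simpa using le_mul_of_sq_le_of_le_mul_pow (fun _ => norm_nonneg _) hconv hc hK

end Module

theorem norm_apply_le_sqrt [SeminormedAddCommGroup V] [Module 𝕜 V] {j : V →ₗ[𝕜] H}
    {A B : V →ₗ[𝕜] V} (h : IsFormallyAdjoint j A B) {C CA CB : ℝ}
    (hj : ∀ x, ‖j x‖ ≤ C * ‖x‖) (hCA : 0 ≤ CA) (hCB : 0 ≤ CB)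
    (hA : ∀ x, ‖A x‖ ≤ CA * ‖x‖) (hB : ∀ x, ‖B x‖ ≤ CB * ‖x‖) (x : V) :
    ‖j (A x)‖ ≤ √(CA * CB) * ‖j x‖ := by
  have hCAB : 0 ≤ CA * CB := mul_nonneg hCA hCB
  have hj' (y : V) : ‖j y‖ ≤ max C 0 * ‖y‖ :=
    (hj y).trans (mul_le_mul_of_nonneg_right (le_max_left C 0) (norm_nonneg y))
  have hBA (y : V) : ‖(B ∘ₗ A) y‖ ≤ CA * CB * ‖y‖ := by
    calc ‖B (A y)‖ ≤ CB * (CA * ‖y‖) := (hB _).trans (mul_le_mul_of_nonneg_left (hA y) hCB)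
      _ = CA * CB * ‖y‖ := by ring
  have hT : ‖j (B (A x))‖ ≤ CA * CB * ‖j x‖ := by
    refine h.comp_self.norm_apply_le_of_norm_pow_apply_le hCAB x (K := max C 0 * ‖x‖) fun n => ?_
    calc ‖j (((B ∘ₗ A) ^ n) x)‖ ≤ max C 0 * ((CA * CB) ^ n * ‖x‖) :=
          (hj' _).trans (mul_le_mul_of_nonneg_left
            (Module.End.norm_pow_apply_le (B ∘ₗ A) hCAB hBA n x) (le_max_right C 0))
      _ = max C 0 * ‖x‖ * (CA * CB) ^ n := by ring
  rw [← Real.sqrt_sq (norm_nonneg (j x)), ← Real.sqrt_mul hCAB,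
    Real.le_sqrt (norm_nonneg _) (by positivity)]
  calc ‖j (A x)‖ ^ 2 ≤ ‖j x‖ * ‖j (B (A x))‖ := h.norm_sq_le x
    _ ≤ ‖j x‖ * (CA * CB * ‖j x‖) := mul_le_mul_of_nonneg_left hT (norm_nonneg _)
    _ = CA * CB * ‖j x‖ ^ 2 := by ring

end IsFormallyAdjoint

end FormalAdjoint

theorem krein_theorem_general {𝕜 H D : Type*} [RCLike 𝕜]
    [NormedAddCommGroup H] [InnerProductSpace 𝕜 H] [CompleteSpace H]
    [NormedAddCommGroup D] [NormedSpace 𝕜 D]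
    (j : D →ₗ[𝕜] H) (C : ℝ) (hj : ∀ x : D, ‖j x‖ ≤ C * ‖x‖) (hdense : DenseRange j)
    (A B : D →ₗ[𝕜] D) (CA CB : ℝ) (hCA : 0 ≤ CA) (hCB : 0 ≤ CB)
    (hA : ∀ x : D, ‖A x‖ ≤ CA * ‖x‖) (hB : ∀ x : D, ‖B x‖ ≤ CB * ‖x‖)
    (hadj : ∀ x y : D, (inner 𝕜 (j (A x)) (j y) : 𝕜) = inner 𝕜 (j x) (j (B y))) :
    (∀ x : D, ‖j (A x)‖ ≤ Real.sqrt (CA * CB) * ‖j x‖) ∧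
    (∀ x : D, ‖j (B x)‖ ≤ Real.sqrt (CA * CB) * ‖j x‖) ∧
    (∃ A' : H →L[𝕜] H, ‖A'‖ ≤ Real.sqrt (CA * CB) ∧ ∀ x : D, A' (j x) = j (A x)) ∧
    (∃ B' : H →L[𝕜] H, ‖B'‖ ≤ Real.sqrt (CA * CB) ∧ ∀ x : D, B' (j x) = j (B x)) := by
  have hAB : IsFormallyAdjoint j A B := hadj
  have hA' := hAB.norm_apply_le_sqrt hj hCA hCB hA hB
  have hB' : ∀ x, ‖j (B x)‖ ≤ √(CA * CB) * ‖j x‖ := by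
    simpa only [mul_comm CB CA] using hAB.symm.norm_apply_le_sqrt hj hCB hCA hB hA
  have hM : 0 ≤ √(CA * CB) := Real.sqrt_nonneg _
  exact ⟨hA', hB', (j ∘ₗ A).exists_extend_of_norm_le hdense hM hA',
    (j ∘ₗ B).exists_extend_of_norm_le hdense hM hB'⟩

/-- M. Krein's theorem: if `D` is a Banach space continuously and densely embedded
(via `j`) in a Hilbert space `H`, and `A`, `B` are linear operators on `D`, bounded on
`D` with constants `C_A`, `C_B`, that are adjoint to each other with respect to the
inner product of `H`, then `‖Ax‖_H ≤ √(C_A C_B)‖x‖_H`, `‖Bx‖_H ≤ √(C_A C_B)‖x‖_H`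
for `x ∈ D`, and `A` and `B` extend to bounded operators on `H` of norm at most
`√(C_A C_B)`. -/
theorem krein_theorem {𝕜 H D : Type*} [RCLike 𝕜]
    [NormedAddCommGroup H] [InnerProductSpace 𝕜 H] [CompleteSpace H]
    [NormedAddCommGroup D] [NormedSpace 𝕜 D] [CompleteSpace D]
    (j : D →ₗ[𝕜] H) (C : ℝ) (hj : ∀ x : D, ‖j x‖ ≤ C * ‖x‖) (hdense : DenseRange j)
    (A B : D →ₗ[𝕜] D) (CA CB : ℝ) (hCA : 0 ≤ CA) (hCB : 0 ≤ CB)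
    (hA : ∀ x : D, ‖A x‖ ≤ CA * ‖x‖) (hB : ∀ x : D, ‖B x‖ ≤ CB * ‖x‖)
    (hadj : ∀ x y : D, (inner 𝕜 (j (A x)) (j y) : 𝕜) = inner 𝕜 (j x) (j (B y))) :
    (∀ x : D, ‖j (A x)‖ ≤ Real.sqrt (CA * CB) * ‖j x‖) ∧
    (∀ x : D, ‖j (B x)‖ ≤ Real.sqrt (CA * CB) * ‖j x‖) ∧
    (∃ A' : H →L[𝕜] H, ‖A'‖ ≤ Real.sqrt (CA * CB) ∧ ∀ x : D, A' (j x) = j (A x)) ∧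
    (∃ B' : H →L[𝕜] H, ‖B'‖ ≤ Real.sqrt (CA * CB) ∧ ∀ x : D, B' (j x) = j (B x)) :=
  krein_theorem_general j C hj hdense A B CA CB hCA hCB hA hB hadj
end
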